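/- Let $d, m \geq 1$ and let $H$ be a finite $d$-partite hypergraph on vertex set $[m] \times [d]$ (with parts $[m] \times \{j\}$ for $j \in [d]$, each edge meeting each part exactly once) that admits a perfect fractional matching. If $d \geq 2$, then $H$ has a matching of size at least $\frac{m}{d-1}$. -/

import Mathlib

/-!
Füredi's argument. Among the fractional matchings of maximal weight pick a vertex `h` of the
fractional matching polytope. At a vertex, the incidence vectors of the support edges restricted
to the tight vertices are linearly independent, so there are at most as many support edges as
tight vertices. If every edge had weight `< 1 / (d - 1)`, every tight vertex would lie on at least
`d` support edges; double counting then forces equality and puts every support edge inside the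
tight set, where the functional "first part minus second part" kills all incidence vectors,
although they span. So some edge `e` has `(d - 1) * h e ≥ 1`. The edges meeting `e` carry weight
at most `d - (d - 1) * h e ≤ d - 1`, and induction on the edges disjoint from `e` yields a matching
of size at least `weight / (d - 1)`. A perfect fractional matching on `[m] × [d]` has weight `m`.
-/

open Finset Filter Topology

theorem eq_zero_of_mem_extremePoints_of_eventually_add_smul_mem {E : Type*} [AddCommGroup E]
    [Module ℝ E] {P : Set E} {x y : E} (hx : x ∈ P.extremePoints ℝ)
    (hy : ∀ᶠ t : ℝ in 𝓝 0, x + t • y ∈ P) : y = 0 := by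
  have hneg : Tendsto (fun t : ℝ => -t) (𝓝 0) (𝓝 0) := by
    simpa using (continuous_neg.tendsto (0 : ℝ))
  have hboth : ∀ᶠ t : ℝ in 𝓝[>] 0, (x + t • y ∈ P ∧ x + (-t) • y ∈ P) ∧ 0 < t :=
    ((hy.and (hneg.eventually hy)).filter_mono nhdsWithin_le_nhds).and self_mem_nhdsWithin
  obtain ⟨t, ⟨hplus, hminus⟩, ht⟩ := hboth.exists
  have hseg : x ∈ openSegment ℝ (x + t • y) (x + (-t) • y) :=
    ⟨1 / 2, 1 / 2, by norm_num, by norm_num, by norm_num, by module⟩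
  have := (mem_extremePoints_iff_left.1 hx).2 _ hplus _ hminus hseg
  simpa [ht.ne'] using this

theorem IsCompact.exists_mem_extremePoints_isMaxOn {E : Type*} [AddCommGroup E] [Module ℝ E]
    [TopologicalSpace E] [T2Space E] [IsTopologicalAddGroup E] [ContinuousSMul ℝ E]
    [LocallyConvexSpace ℝ E] {s : Set E} (hs : IsCompact s) (hne : s.Nonempty)
    (l : StrongDual ℝ E) : ∃ x ∈ s.extremePoints ℝ, IsMaxOn l s x := by
  obtain ⟨z, hz, hzmax⟩ := hs.exists_isMaxOn hne l.continuous.continuousOn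
  have hexp : IsExposed ℝ s (l.toExposed s) := ContinuousLinearMap.toExposed.isExposed
  obtain ⟨x, hx⟩ := (hexp.isCompact hs).extremePoints_nonempty ⟨z, hz, hzmax⟩
  exact ⟨x, hexp.isExtreme.extremePoints_subset_extremePoints hx, hx.1.2⟩

theorem tendsto_add_mul_nhds_zero (a c : ℝ) : Tendsto (fun t => a + t * c) (𝓝 0) (𝓝 a) := by
  simpa using (tendsto_const_nhds (x := a)).add ((tendsto_id (x := 𝓝 (0 : ℝ))).mul_const c)

section Hypergraph

variable {V : Type*} {d : ℕ}

def IsPartite (part : V → Fin d) (G : Finset (Finset V)) : Prop :=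
  ∀ e ∈ G, ∀ j, #{v ∈ e | part v = j} = 1

variable [DecidableEq V] in
def IsFractionalMatching (G : Finset (Finset V)) (g : Finset V → ℝ) : Prop :=
  (∀ e ∈ G, 0 ≤ g e) ∧ ∀ v, ∑ e ∈ G with v ∈ e, g e ≤ 1

variable [DecidableEq V] in
def fractionalMatchingPolytope (G : Finset (Finset V)) : Set (Finset V → ℝ) :=
  {g | IsFractionalMatching G g ∧ ∀ e ∉ G, g e = 0}

theorem IsPartite.sum_comp_part {M : Type*} [AddCommMonoid M] {part : V → Fin d}
    {G : Finset (Finset V)} (hG : IsPartite part G) {e : Finset V} (he : e ∈ G) (f : Fin d → M) :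
    ∑ v ∈ e, f (part v) = ∑ j, f j := by
  rw [← sum_fiberwise e part]
  refine sum_congr rfl fun j _ => ?_
  rw [sum_congr rfl fun v hv => by rw [(mem_filter.1 hv).2], sum_const, hG e he j, one_smul]

theorem IsPartite.card_eq {part : V → Fin d} {G : Finset (Finset V)} (hG : IsPartite part G)
    {e : Finset V} (he : e ∈ G) : #e = d := by
  simpa using hG.sum_comp_part he (fun _ => (1 : ℕ))

theorem IsPartite.nonempty {part : V → Fin d} {G : Finset (Finset V)} (hG : IsPartite part G)
    (hd : 0 < d) {e : Finset V} (he : e ∈ G) : e.Nonempty :=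
  card_pos.1 (hG.card_eq he ▸ hd)

noncomputable def edgeSupport (G : Finset (Finset V)) (h : Finset V → ℝ) : Finset (Finset V) :=
  {e ∈ G | h e ≠ 0}

theorem edgeSupport_subset (G : Finset (Finset V)) (h : Finset V → ℝ) : edgeSupport G h ⊆ G :=
  filter_subset _ _

variable [DecidableEq V]

theorem sum_mul_card_inter (G : Finset (Finset V)) (f : Finset V → ℝ) (A : Finset V) :
    ∑ e ∈ G, f e * #(e ∩ A) = ∑ v ∈ A, ∑ e ∈ G with v ∈ e, f e := by
  simp_rw [sum_filter, inter_comm _ A, ← filter_mem_eq_inter, card_filter]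
  push_cast
  simp_rw [mul_sum, mul_ite, mul_one, mul_zero]
  exact sum_comm

theorem Finset.card_eq_and_subset_of_le_card_filter_mem {S : Finset (Finset V)} {T : Finset V}
    (hd : 0 < d) (hS : ∀ e ∈ S, #e ≤ d) (hT : ∀ v ∈ T, d ≤ #{e ∈ S | v ∈ e}) (hST : #S ≤ #T) :
    #S = #T ∧ ∀ e ∈ S, e ⊆ T := by
  have hcount : ∑ v ∈ T, #{e ∈ S | v ∈ e} = ∑ e ∈ S, #{v ∈ T | v ∈ e} :=
    sum_card_bipartiteAbove_eq_sum_card_bipartiteBelow (fun v e => v ∈ e)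
  have hle : ∀ e ∈ S, #{v ∈ T | v ∈ e} ≤ #e := fun e _ =>
    card_le_card fun v hv => (mem_filter.1 hv).2
  have h₁ : #T * d ≤ ∑ v ∈ T, #{e ∈ S | v ∈ e} := by
    simpa using card_nsmul_le_sum T _ d hT
  have h₂ : ∑ e ∈ S, #e ≤ #S * d := by
    simpa using sum_le_card_nsmul S _ d hS
  have h₃ := sum_le_sum hle
  have hcard : #S = #T := le_antisymm hST (Nat.le_of_mul_le_mul_right (by omega) hd)
  refine ⟨hcard, fun e he => ?_⟩
  have heq := (sum_eq_sum_iff_of_le hle).1 (by rw [hcard] at h₂; omega) e he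
  rw [filter_mem_eq_inter] at heq
  exact inter_eq_right.1 (eq_of_subset_of_card_le inter_subset_right heq.ge)

theorem IsPartite.sum_eq_sum_sum_filter_mem [Fintype V] {part : V → Fin d} {G : Finset (Finset V)}
    (hG : IsPartite part G) (f : Finset V → ℝ) (j : Fin d) :
    ∑ e ∈ G, f e = ∑ v with part v = j, ∑ e ∈ G with v ∈ e, f e := by
  rw [← sum_mul_card_inter]
  refine sum_congr rfl fun e he => ?_
  rw [inter_filter, inter_univ, hG e he j, Nat.cast_one, mul_one]

theorem IsFractionalMatching.mono {G G' : Finset (Finset V)} {g : Finset V → ℝ}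
    (hg : IsFractionalMatching G g) (hG' : G' ⊆ G) : IsFractionalMatching G' g :=
  ⟨fun e he => hg.1 e (hG' he), fun v => (sum_le_sum_of_subset_of_nonneg
    (filter_subset_filter _ hG') fun e he _ => hg.1 e (mem_filter.1 he).1).trans (hg.2 v)⟩

theorem IsFractionalMatching.le_one {G : Finset (Finset V)} {g : Finset V → ℝ}
    (hg : IsFractionalMatching G g) {e : Finset V} (he : e ∈ G) {v : V} (hv : v ∈ e) : g e ≤ 1 :=
  (single_le_sum (fun e he => hg.1 e (mem_filter.1 he).1) (mem_filter.2 ⟨he, hv⟩)).trans (hg.2 v)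

theorem isCompact_fractionalMatchingPolytope {G : Finset (Finset V)} (hG : ∀ e ∈ G, e.Nonempty) :
    IsCompact (fractionalMatchingPolytope G) := by
  have hclosed : IsClosed (fractionalMatchingPolytope G) := by
    simp only [fractionalMatchingPolytope, IsFractionalMatching, Set.ofPred_and, Set.ofPred_forall]
    refine .inter (.inter ?_ ?_) ?_
    · exact isClosed_iInter fun e => isClosed_iInter fun _ =>
        isClosed_le continuous_const (continuous_apply e)
    · exact isClosed_iInter fun v =>
        isClosed_le (continuous_finsetSum _ fun e _ => continuous_apply e) continuous_const
    · exact isClosed_iInter fun e => isClosed_iInter fun _ =>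
        isClosed_eq (continuous_apply e) continuous_const
  refine (isCompact_univ_pi fun _ => isCompact_Icc (a := (0 : ℝ)) (b := 1)).of_isClosed_subset
    hclosed fun g ⟨hg, hzero⟩ e _ => ?_
  by_cases he : e ∈ G
  · obtain ⟨v, hv⟩ := hG e he
    exact ⟨hg.1 e he, hg.le_one he hv⟩
  · simp [hzero e he]

theorem IsFractionalMatching.sum_not_disjoint_add_le {part : V → Fin d} {G : Finset (Finset V)}
    (hG : IsPartite part G) {g : Finset V → ℝ} (hg : IsFractionalMatching G g) {e : Finset V}
    (he : e ∈ G) (hd : 0 < d) :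
    ∑ e' ∈ G with ¬Disjoint e' e, g e' + (d - 1) * g e ≤ d := by
  set N := {e' ∈ G | ¬Disjoint e' e}
  have heN : e ∈ N := mem_filter.2
    ⟨he, not_disjoint_iff_nonempty_inter.2 (by rw [inter_self]; exact hG.nonempty hd he)⟩
  have hmeet : ∀ e' ∈ N, 1 ≤ (#(e' ∩ e) : ℝ) := fun e' he' => by
    exact_mod_cast card_pos.2 (not_disjoint_iff_nonempty_inter.1 (mem_filter.1 he').2)
  calc ∑ e' ∈ N, g e' + (d - 1) * g e
      ≤ ∑ e' ∈ N, g e' + ∑ e' ∈ N, g e' * (#(e' ∩ e) - 1) := by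
        gcongr
        refine le_of_eq_of_le ?_ (single_le_sum (fun e' he' => mul_nonneg
          (hg.1 e' (mem_filter.1 he').1) (by linarith [hmeet e' he'])) heN)
        rw [inter_self, hG.card_eq he]
        ring
    _ = ∑ e' ∈ N, g e' * #(e' ∩ e) := by
        rw [← sum_add_distrib]
        exact sum_congr rfl fun _ _ => by ring
    _ ≤ ∑ e' ∈ G, g e' * #(e' ∩ e) :=
        sum_le_sum_of_subset_of_nonneg (filter_subset _ _)
          fun e' he' _ => mul_nonneg (hg.1 e' he') (Nat.cast_nonneg _)
    _ = ∑ v ∈ e, ∑ e' ∈ G with v ∈ e', g e' := sum_mul_card_inter G g e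
    _ ≤ ∑ v ∈ e, 1 := sum_le_sum fun v _ => hg.2 v
    _ = d := by simp [hG.card_eq he]

noncomputable def tightVertices [Fintype V] (G : Finset (Finset V)) (h : Finset V → ℝ) : Finset V :=
  {v | ∑ e ∈ G with v ∈ e, h e = 1}

def incidenceMatrix (T : Finset V) (S : Finset (Finset V)) : Matrix T S ℝ :=
  fun v e => if (v : V) ∈ (e : Finset V) then 1 else 0

theorem IsPartite.vecMul_incidenceMatrix_eq_zero {part : V → Fin d} {G : Finset (Finset V)}
    (hG : IsPartite part G) {T : Finset V} {S : Finset (Finset V)} (hSG : S ⊆ G)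
    (hST : ∀ e ∈ S, e ⊆ T) {f : Fin d → ℝ} (hf : ∑ j, f j = 0) :
    Matrix.vecMul (fun v : T => f (part v)) (incidenceMatrix T S) = 0 := by
  funext e
  have hsum : ∑ v : T, (if (v : V) ∈ (e : Finset V) then f (part v) else 0) = 0 := by
    rw [sum_coe_sort T (fun v => if v ∈ (e : Finset V) then f (part v) else 0), ← sum_filter,
      filter_mem_eq_inter, inter_eq_right.2 (hST e e.2), hG.sum_comp_part (hSG e.2), hf]
  simpa [Matrix.vecMul, dotProduct, incidenceMatrix] using hsum

variable [Fintype V]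

theorem injective_incidenceMatrix_mulVecLin {G : Finset (Finset V)} {h : Finset V → ℝ}
    (hh : h ∈ (fractionalMatchingPolytope G).extremePoints ℝ) :
    Function.Injective (incidenceMatrix (tightVertices G h) (edgeSupport G h)).mulVecLin := by
  set S := edgeSupport G h
  set T := tightVertices G h
  obtain ⟨⟨hh0, hh1⟩, hhG⟩ := hh.1
  rw [← LinearMap.ker_eq_bot, LinearMap.ker_eq_bot']
  intro c hc
  set y : Finset V → ℝ := fun e => if he : e ∈ S then c ⟨e, he⟩ else 0
  have hyS : ∀ e ∉ S, y e = 0 := fun e he => dif_neg he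
  have hload : ∀ v (hv : v ∈ T),
      ∑ e ∈ G with v ∈ e, y e = (incidenceMatrix T S).mulVec c ⟨v, hv⟩ := by
    intro v hv
    rw [sum_filter, ← sum_subset (edgeSupport_subset G h) (fun e _ he => by simp [hyS e he]),
      ← sum_coe_sort S]
    simp [Matrix.mulVec, dotProduct, incidenceMatrix, y]
  have hedge : ∀ e, ∀ᶠ t : ℝ in 𝓝 0,
      (e ∈ G → 0 ≤ h e + t * y e) ∧ (e ∉ G → h e + t * y e = 0) := by
    intro e
    by_cases heS : e ∈ S
    · obtain ⟨heG, hne⟩ := mem_filter.1 heS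
      filter_upwards [(tendsto_add_mul_nhds_zero (h e) (y e)).eventually_const_lt
        (lt_of_le_of_ne (hh0 e heG) (Ne.symm hne))] with t ht
      exact ⟨fun _ => ht.le, fun h' => absurd heG h'⟩
    · refine Eventually.of_forall fun t => ?_
      rw [hyS e heS, mul_zero, add_zero]
      exact ⟨hh0 e, hhG e⟩
  have hvertex : ∀ v, ∀ᶠ t : ℝ in 𝓝 0, ∑ e ∈ G with v ∈ e, (h e + t * y e) ≤ 1 := by
    intro v
    simp_rw [sum_add_distrib, ← mul_sum]
    by_cases hvT : v ∈ T
    · refine Eventually.of_forall fun t => ?_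
      rw [hload v hvT, ← Matrix.mulVecLin_apply, hc]
      simpa using hh1 v
    · filter_upwards [(tendsto_add_mul_nhds_zero _ _).eventually_lt_const
        (lt_of_le_of_ne (hh1 v) fun h' => hvT (mem_filter.2 ⟨mem_univ v, h'⟩))] with t ht
      exact ht.le
  have hy : ∀ᶠ t : ℝ in 𝓝 0, h + t • y ∈ fractionalMatchingPolytope G := by
    filter_upwards [eventually_all.2 hedge, eventually_all.2 hvertex] with t ht₁ ht₂
    exact ⟨⟨fun e he => (ht₁ e).1 he, ht₂⟩, fun e he => (ht₁ e).2 he⟩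
  have hy0 := eq_zero_of_mem_extremePoints_of_eventually_add_smul_mem hh hy
  funext e
  simpa [y] using congrFun hy0 e

theorem le_card_filter_mem_edgeSupport {G : Finset (Finset V)} {h : Finset V → ℝ}
    (hlight : ∀ e ∈ G, (d - 1) * h e < 1) {v : V} (hv : v ∈ tightVertices G h) :
    d ≤ #{e ∈ edgeSupport G h | v ∈ e} := by
  have hsum : ∑ e ∈ edgeSupport G h with v ∈ e, h e = 1 := by
    rw [edgeSupport, filter_comm, sum_filter_ne_zero]
    exact (mem_filter.1 hv).2
  have hne : {e ∈ edgeSupport G h | v ∈ e}.Nonempty :=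
    nonempty_of_sum_ne_zero (by rw [hsum]; exact one_ne_zero)
  have hlt : (d : ℝ) - 1 < #{e ∈ edgeSupport G h | v ∈ e} :=
    calc (d : ℝ) - 1 = ∑ e ∈ edgeSupport G h with v ∈ e, (d - 1) * h e := by
          rw [← mul_sum, hsum, mul_one]
      _ < ∑ e ∈ edgeSupport G h with v ∈ e, 1 :=
          sum_lt_sum_of_nonempty hne fun e he => hlight e (mem_filter.1 (mem_filter.1 he).1).1
      _ = #{e ∈ edgeSupport G h | v ∈ e} := by simp
  have : (d : ℝ) < #{e ∈ edgeSupport G h | v ∈ e} + 1 := by linarith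
  exact_mod_cast Nat.lt_succ_iff.1 (by exact_mod_cast this)

theorem IsPartite.exists_one_le_mul_of_mem_extremePoints {part : V → Fin d} {G : Finset (Finset V)}
    (hG : IsPartite part G) (hd : 2 ≤ d) {h : Finset V → ℝ}
    (hh : h ∈ (fractionalMatchingPolytope G).extremePoints ℝ) (hne : h ≠ 0) :
    ∃ e ∈ G, 1 ≤ (d - 1) * h e := by
  by_contra! hlight
  set S := edgeSupport G h
  set T := tightVertices G h
  have hinj := injective_incidenceMatrix_mulVecLin hh
  obtain ⟨hcard, hST⟩ := card_eq_and_subset_of_le_card_filter_mem (by omega)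
    (fun e he => (hG.card_eq (edgeSupport_subset G h he)).le)
    (fun v hv => le_card_filter_mem_edgeSupport hlight hv)
    (by simpa using LinearMap.finrank_le_finrank_of_injective hinj)
  have hsurj := (LinearMap.injective_iff_surjective_of_finrank_eq_finrank
    (by simpa using hcard)).1 hinj
  set j₀ : Fin d := ⟨0, by omega⟩
  set j₁ : Fin d := ⟨1, by omega⟩
  set ε : Fin d → ℝ := Pi.single j₀ 1 - Pi.single j₁ 1
  have hε : Matrix.vecMul (fun v : T => ε (part v)) (incidenceMatrix T S) = 0 :=
    hG.vecMul_incidenceMatrix_eq_zero (edgeSupport_subset G h) hST (by simp [ε])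
  obtain ⟨e₀, he₀⟩ : S.Nonempty := by
    by_contra! hS
    refine hne (funext fun e => ?_)
    by_contra hhe
    by_cases heG : e ∈ G
    · exact notMem_empty e (hS ▸ mem_filter.2 ⟨heG, hhe⟩)
    · exact hhe (hh.1.2 e heG)
  obtain ⟨v₀, hv₀⟩ : {v ∈ e₀ | part v = j₀}.Nonempty := by
    rw [← card_pos, hG e₀ (edgeSupport_subset G h he₀) j₀]
    exact one_pos
  obtain ⟨c, hc⟩ := hsurj (Pi.single ⟨v₀, hST e₀ he₀ (mem_filter.1 hv₀).1⟩ 1)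
  have := congrArg (dotProduct fun v : T => ε (part v)) hc
  rw [Matrix.mulVecLin_apply, Matrix.dotProduct_mulVec, hε, zero_dotProduct,
    dotProduct_single] at this
  have hj : j₀ ≠ j₁ := by simp [j₀, j₁, Fin.ext_iff]
  simp [ε, (mem_filter.1 hv₀).2, hj] at this

theorem IsFractionalMatching.exists_mem_extremePoints_sum_le {G : Finset (Finset V)}
    (hG : ∀ e ∈ G, e.Nonempty) {g : Finset V → ℝ} (hg : IsFractionalMatching G g) :
    ∃ h ∈ (fractionalMatchingPolytope G).extremePoints ℝ, ∑ e ∈ G, g e ≤ ∑ e ∈ G, h e := by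
  set g' : Finset V → ℝ := fun e => if e ∈ G then g e else 0
  have hsum : ∀ A ⊆ G, ∑ e ∈ A, g' e = ∑ e ∈ A, g e := fun A hA =>
    sum_congr rfl fun e he => if_pos (hA he)
  have hg' : g' ∈ fractionalMatchingPolytope G :=
    ⟨⟨fun e he => by simpa [g', he] using hg.1 e he,
      fun v => by simpa only [hsum _ (filter_subset _ G)] using hg.2 v⟩, fun e he => if_neg he⟩
  obtain ⟨h, hh, hmax⟩ := (isCompact_fractionalMatchingPolytope hG).exists_mem_extremePoints_isMaxOn
    ⟨g', hg'⟩ (∑ e ∈ G, ContinuousLinearMap.proj e)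
  refine ⟨h, hh, ?_⟩
  simpa [hsum G subset_rfl] using hmax hg'

theorem IsPartite.exists_matching_sum_le {part : V → Fin d} {G : Finset (Finset V)}
    (hG : IsPartite part G) (hd : 2 ≤ d) {g : Finset V → ℝ} (hg : IsFractionalMatching G g) :
    ∃ M ⊆ G, (M : Set (Finset V)).Pairwise Disjoint ∧ ∑ e ∈ G, g e ≤ (d - 1) * #M := by
  induction G using Finset.strongInduction generalizing g with
  | H G ih =>
  obtain ⟨h, hh, hgh⟩ := hg.exists_mem_extremePoints_sum_le fun e he => hG.nonempty (by omega) he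
  obtain rfl | hne := eq_or_ne h 0
  · exact ⟨∅, empty_subset _, by simp, by simpa using hgh⟩
  obtain ⟨e, he, hheavy⟩ := hG.exists_one_le_mul_of_mem_extremePoints hd hh hne
  have hee : ¬Disjoint e e := by
    rw [disjoint_self_iff_empty]; exact (hG.nonempty (by omega) he).ne_empty
  set G' := {e' ∈ G | Disjoint e' e}
  obtain ⟨M, hMG', hM, hhM⟩ := ih G' (filter_ssubset.2 ⟨e, he, hee⟩)
    (fun e' he' => hG e' (mem_filter.1 he').1) (hh.1.1.mono (filter_subset _ _))
  have heM : e ∉ M := fun heM => hee (mem_filter.1 (hMG' heM)).2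
  refine ⟨insert e M, insert_subset he (hMG'.trans (filter_subset _ _)), ?_, ?_⟩
  · rw [coe_insert]
    exact hM.insert_of_symm fun e' he' _ => (mem_filter.1 (hMG' he')).2.symm
  · have hN := hh.1.1.sum_not_disjoint_add_le hG he (by omega)
    calc ∑ e ∈ G, g e ≤ ∑ e ∈ G', h e + ∑ e' ∈ G with ¬Disjoint e' e, h e' := by
          rwa [sum_filter_add_sum_filter_not]
      _ ≤ (d - 1) * #M + (d - 1) := by linarith
      _ = (d - 1) * #(insert e M) := by rw [card_insert_of_notMem heM]; push_cast; ring

end Hypergraph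

theorem partite_perfect_fractional_matching_general (m d : ℕ) (hd : 2 ≤ d)
    (E : Finset (Finset (Fin m × Fin d)))
    (hE : ∀ e ∈ E, ∀ j : Fin d, (e.filter (fun v => v.2 = j)).card = 1)
    (f : Finset (Fin m × Fin d) → ℝ) (hf0 : ∀ e ∈ E, 0 ≤ f e)
    (hperfect : ∀ v : Fin m × Fin d, ∑ e ∈ E.filter (fun e => v ∈ e), f e = 1) :
    ∃ M : Finset (Finset (Fin m × Fin d)), M ⊆ E ∧
      (↑M : Set (Finset (Fin m × Fin d))).Pairwise (fun a b => Disjoint a b) ∧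
      (m : ℝ) / ((d : ℝ) - 1) ≤ M.card := by
  have hE' : IsPartite Prod.snd E := hE
  obtain ⟨M, hME, hM, hfM⟩ := hE'.exists_matching_sum_le hd ⟨hf0, fun v => (hperfect v).le⟩
  have hfm : ∑ e ∈ E, f e = m := by
    rw [hE'.sum_eq_sum_sum_filter_mem f ⟨0, by omega⟩]
    simp only [hperfect, sum_const, nsmul_eq_mul, mul_one, Nat.cast_inj]
    rw [card_filter, Fintype.sum_prod_type]
    simp
  refine ⟨M, hME, hM, ?_⟩
  have hd1 : (0 : ℝ) < d - 1 := by
    have : (2 : ℝ) ≤ d := by exact_mod_cast hd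
    linarith
  rw [div_le_iff₀ hd1]
  linarith

/-- A `d`-partite hypergraph on `[m] × [d]` with a perfect fractional matching has a
matching of size at least `m / (d - 1)` when `d ≥ 2`. -/
theorem partite_perfect_fractional_matching (m d : ℕ) (hm : 1 ≤ m) (hd : 2 ≤ d)
    (E : Finset (Finset (Fin m × Fin d)))
    (hE : ∀ e ∈ E, ∀ j : Fin d, (e.filter (fun v => v.2 = j)).card = 1)
    (f : Finset (Fin m × Fin d) → ℝ) (hf0 : ∀ e ∈ E, 0 ≤ f e)
    (hperfect : ∀ v : Fin m × Fin d, ∑ e ∈ E.filter (fun e => v ∈ e), f e = 1) :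
    ∃ M : Finset (Finset (Fin m × Fin d)), M ⊆ E ∧
      (↑M : Set (Finset (Fin m × Fin d))).Pairwise (fun a b => Disjoint a b) ∧
      (m : ℝ) / ((d : ℝ) - 1) ≤ M.card :=
  partite_perfect_fractional_matching_general m d hd E hE f hf0 hperfect
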